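/- Let q be a prime and let N, X be positive real numbers with N·X ≤ q. Let f be a completely multiplicative function with |f(n)| = 1 for all n, let r : ℕ → ℝ≥0 be a non-negative function, and set r_f(n) := f(n)r(n) and R_χ := ∑_{a ≤ X} r_f(a)χ(a). Then M_2 := ∑_{χ ≠ χ_0} |∑_{n ≤ N} f(n)χ(n)|^2 |R_χ|^2 satisfies M_2 ≥ φ(q) · ∑_{m,n ≤ N, a,b ≤ X, an = bm, q ∤ an} r(a)r(b) − q·N · ∑_{n ≤ X} r(n)^2. -/

import Mathlib

/-!
Expanding `|∑ₙ f(n)χ(n)|² |R_χ|² = |∑_{n,a} f(n) r_f(a) χ(an)|²` and summing over all characters,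
orthogonality keeps exactly the pairs `(n, a), (m, b)` with `an ≡ bm (mod q)` and `q ∤ an`.
Since `an, bm ≤ NX ≤ q`, these congruences are equalities `an = bm`, and then complete
multiplicativity gives `f(n) r_f(a) conj (f(m) r_f(b)) = r(a) r(b)`. Removing the principal character
costs at most `⌊N⌋² ⌊X⌋ ∑ r(n)² ≤ qN ∑ r(n)²`, by `|χ₀| ≤ 1` and Cauchy–Schwarz.
-/

open Finset ComplexConjugate

namespace DirichletCharacter

variable {q : ℕ}

theorem norm_sum_mul_apply_sq_le {ι : Type*} (χ : DirichletCharacter ℂ q) (s : Finset ι)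
    (c : ι → ℂ) (u : ι → ZMod q) :
    ‖∑ i ∈ s, c i * χ (u i)‖ ^ 2 ≤ #s * ∑ i ∈ s, ‖c i‖ ^ 2 := by
  have hle : ‖∑ i ∈ s, c i * χ (u i)‖ ≤ ∑ i ∈ s, ‖c i‖ :=
    (norm_sum_le _ _).trans <| sum_le_sum fun i _ => by
      rw [norm_mul]
      exact mul_le_of_le_one_right (norm_nonneg _) (χ.norm_le_one _)
  calc ‖∑ i ∈ s, c i * χ (u i)‖ ^ 2 ≤ (∑ i ∈ s, ‖c i‖) ^ 2 := by gcongr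
    _ ≤ #s * ∑ i ∈ s, ‖c i‖ ^ 2 := sq_sum_le_card_mul_sum_sq

theorem sum_mul_apply_mul_sum_mul_apply {R : Type*} [CommRing R]
    (χ : DirichletCharacter R q) (s t : Finset ℕ) (c d : ℕ → R) :
    (∑ n ∈ s, c n * χ n) * (∑ a ∈ t, d a * χ a) =
      ∑ p ∈ s ×ˢ t, c p.1 * d p.2 * χ ↑(p.2 * p.1) := by
  rw [sum_mul_sum, sum_product]
  refine sum_congr rfl fun n _ => sum_congr rfl fun a _ => ?_
  push_cast
  rw [map_mul]
  ring

variable [NeZero q]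

theorem sum_apply_mul_conj_apply (x y : ZMod q) :
    ∑ χ : DirichletCharacter ℂ q, χ x * conj (χ y) =
      if x = y ∧ IsUnit x then (q.totient : ℂ) else 0 := by
  by_cases hy : IsUnit y
  · obtain ⟨u, rfl⟩ := hy
    have hconj (χ : DirichletCharacter ℂ q) : χ x * conj (χ u) = χ (u : ZMod q)⁻¹ * χ x := by
      rw [← RCLike.star_def, MulChar.star_apply', MulChar.inv_apply, Ring.inverse_unit,
        ZMod.inv_coe_unit, mul_comm]
    simp only [hconj, sum_char_inv_mul_char_eq ℂ u.isUnit x, eq_comm (a := x)]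
    by_cases hx : (u : ZMod q) = x
    · simp [← hx]
    · simp [hx]
  · have hx : ¬ (x = y ∧ IsUnit x) := fun ⟨hxy, hx⟩ => hy (hxy ▸ hx)
    simp [MulChar.map_nonunit _ hy, hx]

theorem sum_norm_sq_sum_mul_apply {ι : Type*} (s : Finset ι) (c : ι → ℂ) (u : ι → ZMod q) :
    ((∑ χ : DirichletCharacter ℂ q, ‖∑ i ∈ s, c i * χ (u i)‖ ^ 2 : ℝ) : ℂ) =
      q.totient * ∑ i ∈ s, ∑ j ∈ s,
        if u i = u j ∧ IsUnit (u i) then c i * conj (c j) else 0 := by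
  have hexpand (χ : DirichletCharacter ℂ q) : ((‖∑ i ∈ s, c i * χ (u i)‖ ^ 2 : ℝ) : ℂ) =
      ∑ i ∈ s, ∑ j ∈ s, c i * conj (c j) * (χ (u i) * conj (χ (u j))) := by
    rw [Complex.ofReal_pow, ← Complex.mul_conj', map_sum, sum_mul_sum]
    exact sum_congr rfl fun i _ => sum_congr rfl fun j _ => by simp only [map_mul]; ring
  simp only [Complex.ofReal_sum, hexpand]
  rw [sum_comm, mul_sum]
  refine sum_congr rfl fun i _ => ?_
  rw [sum_comm, mul_sum]
  refine sum_congr rfl fun j _ => ?_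
  rw [← mul_sum, sum_apply_mul_conj_apply]
  split_ifs <;> ring

end DirichletCharacter

theorem ZMod.natCast_eq_natCast_and_isUnit_iff {q x y : ℕ} [Fact q.Prime] (hx : x ≤ q)
    (hy : y ≤ q) : ((x : ZMod q) = y ∧ IsUnit (x : ZMod q)) ↔ x = y ∧ ¬ q ∣ x := by
  have hunit (k : ℕ) : IsUnit (k : ZMod q) ↔ ¬ q ∣ k := by
    rw [isUnit_iff_ne_zero, ne_eq, ZMod.natCast_eq_zero_iff]
  refine ⟨fun ⟨hxy, hxq⟩ => ⟨?_, (hunit x).1 hxq⟩, fun ⟨hxy, hxq⟩ => ⟨hxy ▸ rfl, (hunit x).2 hxq⟩⟩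
  have hyq : ¬ q ∣ y := (hunit y).1 (hxy ▸ hxq)
  have hxlt : x < q := hx.lt_of_ne fun h => (hunit x).1 hxq (h ▸ dvd_rfl)
  have hylt : y < q := hy.lt_of_ne fun h => hyq (h ▸ dvd_rfl)
  rw [← ZMod.val_natCast_of_lt hxlt, ← ZMod.val_natCast_of_lt hylt, hxy]

theorem mul_mul_conj_mul_eq_one {f : ℕ → ℂ} (hf : ∀ m n : ℕ, f (m * n) = f m * f n)
    (hf1 : ∀ n : ℕ, 0 < n → ‖f n‖ = 1) {a b m n : ℕ} (h : a * n = b * m) (hpos : 0 < a * n) :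
    f n * f a * conj (f m * f b) = 1 := by
  rw [mul_comm (f n), mul_comm (f m), ← hf, ← hf, ← h, Complex.mul_conj', hf1 _ hpos]
  norm_num

theorem sum_norm_sq_mul_norm_sq_eq_totient_mul {q N X : ℕ} [Fact q.Prime] (hNX : N * X ≤ q)
    {f : ℕ → ℂ} (hf : ∀ m n : ℕ, f (m * n) = f m * f n)
    (hf1 : ∀ n : ℕ, 0 < n → ‖f n‖ = 1) (r : ℕ → ℝ) :
    ∑ χ : DirichletCharacter ℂ q, ‖∑ n ∈ Icc 1 N, f n * χ n‖ ^ 2 *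
        ‖∑ a ∈ Icc 1 X, f a * r a * χ a‖ ^ 2 =
      q.totient * ∑ m ∈ Icc 1 N, ∑ n ∈ Icc 1 N, ∑ a ∈ Icc 1 X, ∑ b ∈ Icc 1 X,
        if a * n = b * m ∧ ¬ q ∣ a * n then r a * r b else 0 := by
  have hprod (χ : DirichletCharacter ℂ q) :
      ‖∑ n ∈ Icc 1 N, f n * χ n‖ ^ 2 * ‖∑ a ∈ Icc 1 X, f a * r a * χ a‖ ^ 2 =
        ‖∑ p ∈ Icc 1 N ×ˢ Icc 1 X, f p.1 * (f p.2 * r p.2) * χ ↑(p.2 * p.1)‖ ^ 2 := by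
    rw [← mul_pow, ← norm_mul, χ.sum_mul_apply_mul_sum_mul_apply]
  have hdiag : ∀ p ∈ Icc 1 N ×ˢ Icc 1 X, ∀ p' ∈ Icc 1 N ×ˢ Icc 1 X,
      (if ((p.2 * p.1 : ℕ) : ZMod q) = ↑(p'.2 * p'.1) ∧ IsUnit ((p.2 * p.1 : ℕ) : ZMod q)
        then f p.1 * (f p.2 * r p.2) * conj (f p'.1 * (f p'.2 * r p'.2)) else 0) =
      ((if p.2 * p.1 = p'.2 * p'.1 ∧ ¬ q ∣ p.2 * p.1 then r p.2 * r p'.2 else 0 : ℝ) : ℂ) := by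
    rintro ⟨n, a⟩ hp ⟨m, b⟩ hp'
    simp only [mem_product, mem_Icc] at hp hp'
    have hle {k j : ℕ} (hk : k ≤ N) (hj : j ≤ X) : j * k ≤ q :=
      (Nat.mul_le_mul hj hk).trans (mul_comm X N ▸ hNX)
    dsimp only
    simp only [ZMod.natCast_eq_natCast_and_isUnit_iff (hle hp.1.2 hp.2.2) (hle hp'.1.2 hp'.2.2)]
    split_ifs with h
    · have hunit := mul_mul_conj_mul_eq_one hf hf1 h.1 (Nat.mul_pos hp.2.1 hp.1.1)
      simp only [map_mul, Complex.conj_ofReal] at hunit ⊢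
      push_cast
      linear_combination (r a * r b : ℂ) * hunit
    · simp
  apply Complex.ofReal_injective
  rw [sum_congr rfl fun χ _ => hprod χ, DirichletCharacter.sum_norm_sq_sum_mul_apply,
    sum_congr rfl fun p hp => sum_congr rfl fun p' hp' => hdiag p hp p' hp']
  push_cast
  simp only [sum_product]
  exact congrArg _ ((sum_congr rfl fun n _ => sum_comm).trans sum_comm)

theorem norm_sq_mul_norm_sq_le {q N X : ℕ} (χ : DirichletCharacter ℂ q) {f : ℕ → ℂ}
    (hf1 : ∀ n : ℕ, 0 < n → ‖f n‖ = 1) (r : ℕ → ℝ) :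
    ‖∑ n ∈ Icc 1 N, f n * χ n‖ ^ 2 * ‖∑ a ∈ Icc 1 X, f a * r a * χ a‖ ^ 2 ≤
      N ^ 2 * (X * ∑ a ∈ Icc 1 X, r a ^ 2) := by
  have hS : ‖∑ n ∈ Icc 1 N, f n * χ n‖ ^ 2 ≤ N ^ 2 := by
    refine (χ.norm_sum_mul_apply_sq_le _ f _).trans_eq ?_
    rw [sum_congr rfl fun n hn => by rw [hf1 n (mem_Icc.1 hn).1, one_pow]]
    simp [sq]
  have hR : ‖∑ a ∈ Icc 1 X, f a * r a * χ a‖ ^ 2 ≤ X * ∑ a ∈ Icc 1 X, r a ^ 2 := by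
    refine (χ.norm_sum_mul_apply_sq_le _ (fun a => f a * r a) _).trans_eq ?_
    rw [sum_congr rfl fun a ha => by
      rw [norm_mul, hf1 a (mem_Icc.1 ha).1, one_mul, Complex.norm_real, Real.norm_eq_abs, sq_abs]]
    simp
  gcongr

theorem stmt_5_general (q : ℕ) [Fact q.Prime] (N X : ℝ) (hN : 0 < N) (hX : 0 < X)
    (hNX : N * X ≤ q)
    (f : ℕ → ℂ) (hf : ∀ m n : ℕ, f (m * n) = f m * f n)
    (hf1 : ∀ n : ℕ, 0 < n → ‖f n‖ = 1)
    (r : ℕ → ℝ)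
    (rf : ℕ → ℂ) (hrf : ∀ n : ℕ, rf n = f n * (r n : ℂ))
    (M₂ : ℝ)
    (hM₂ : M₂ = ∑ χ ∈ Finset.univ.filter (fun χ : DirichletCharacter ℂ q => χ ≠ 1),
      (‖∑ n ∈ Finset.Icc 1 ⌊N⌋₊, f n * χ (n : ZMod q)‖) ^ 2 *
        (‖∑ a ∈ Finset.Icc 1 ⌊X⌋₊, rf a * χ (a : ZMod q)‖) ^ 2) :
    M₂ ≥ (Nat.totient q : ℝ) *
        (∑ m ∈ Finset.Icc 1 ⌊N⌋₊, ∑ n ∈ Finset.Icc 1 ⌊N⌋₊,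
          ∑ a ∈ Finset.Icc 1 ⌊X⌋₊, ∑ b ∈ Finset.Icc 1 ⌊X⌋₊,
            if a * n = b * m ∧ ¬ (q ∣ a * n) then r a * r b else 0) -
      (q : ℝ) * N * ∑ n ∈ Finset.Icc 1 ⌊X⌋₊, (r n) ^ 2 := by
  have hfloor : (⌊N⌋₊ : ℝ) * ⌊X⌋₊ ≤ q :=
    (mul_le_mul (Nat.floor_le hN.le) (Nat.floor_le hX.le) (by positivity) hN.le).trans hNX
  have hprincipal := norm_sq_mul_norm_sq_le (1 : DirichletCharacter ℂ q) hf1 r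
    (N := ⌊N⌋₊) (X := ⌊X⌋₊)
  have hsq : (⌊N⌋₊ : ℝ) ^ 2 * (⌊X⌋₊ * ∑ a ∈ Icc 1 ⌊X⌋₊, r a ^ 2) ≤
      q * N * ∑ a ∈ Icc 1 ⌊X⌋₊, r a ^ 2 := by
    have hfloor_sq : (⌊N⌋₊ : ℝ) ^ 2 * ⌊X⌋₊ ≤ N * q := by
      rw [sq, mul_assoc]
      exact mul_le_mul (Nat.floor_le hN.le) hfloor (by positivity) hN.le
    rw [← mul_assoc, mul_comm (q : ℝ)]
    gcongr
  simp only [hrf] at hM₂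
  rw [hM₂, filter_ne', sum_erase_eq_sub (mem_univ 1),
    sum_norm_sq_mul_norm_sq_eq_totient_mul (by exact_mod_cast hfloor) hf hf1]
  linarith

/-- **Lower bound for `M₂`.** For a prime `q`, positive reals `N, X` with
`N·X ≤ q`, a completely multiplicative `f` of modulus `1`, a non-negative
`r : ℕ → ℝ`, and `r_f(n) = f(n)r(n)`, the quantity
`M₂ = ∑_{χ ≠ χ₀} |∑_{n ≤ N} f(n)χ(n)|² |∑_{a ≤ X} r_f(a)χ(a)|²` satisfies
`M₂ ≥ φ(q) ∑_{m,n ≤ N, a,b ≤ X, an = bm, q ∤ an} r(a)r(b) − qN ∑_{n ≤ X} r(n)²`. -/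
theorem stmt_5 (q : ℕ) [Fact q.Prime] (N X : ℝ) (hN : 0 < N) (hX : 0 < X)
    (hNX : N * X ≤ q)
    (f : ℕ → ℂ) (hf : ∀ m n : ℕ, f (m * n) = f m * f n)
    (hf1 : ∀ n : ℕ, 0 < n → ‖f n‖ = 1)
    (r : ℕ → ℝ) (hr : ∀ n : ℕ, 0 ≤ r n)
    (rf : ℕ → ℂ) (hrf : ∀ n : ℕ, rf n = f n * (r n : ℂ))
    (M₂ : ℝ)
    (hM₂ : M₂ = ∑ χ ∈ Finset.univ.filter (fun χ : DirichletCharacter ℂ q => χ ≠ 1),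
      (‖∑ n ∈ Finset.Icc 1 ⌊N⌋₊, f n * χ (n : ZMod q)‖) ^ 2 *
        (‖∑ a ∈ Finset.Icc 1 ⌊X⌋₊, rf a * χ (a : ZMod q)‖) ^ 2) :
    M₂ ≥ (Nat.totient q : ℝ) *
        (∑ m ∈ Finset.Icc 1 ⌊N⌋₊, ∑ n ∈ Finset.Icc 1 ⌊N⌋₊,
          ∑ a ∈ Finset.Icc 1 ⌊X⌋₊, ∑ b ∈ Finset.Icc 1 ⌊X⌋₊,
            if a * n = b * m ∧ ¬ (q ∣ a * n) then r a * r b else 0) -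
      (q : ℝ) * N * ∑ n ∈ Finset.Icc 1 ⌊X⌋₊, (r n) ^ 2 :=
  stmt_5_general q N X hN hX hNX f hf hf1 r rf hrf M₂ hM₂
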